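/- Suppose L is a higgledy-piggledy set of lines of PG(N,q) with |L| = N + ⌊N/2⌋ ≤ q and N odd. Then the lines of L are pairwise disjoint. -/

import Mathlib

open Module

namespace HP

variable (F : Type*) [Field F] (V : Type*) [AddCommGroup V] [Module F V]

/-- The set of points of the projective space `PG(V)` lying in a linear subspace `W`.
A projective point lies in `W` iff its representing one-dimensional subspace is below `W`. -/
def ptsIn (W : Submodule F V) : Set (Projectivization F V) := {P | P.submodule ≤ W}

/-- The linear span of a set of projective points. -/
noncomputable def spanPts (S : Set (Projectivization F V)) : Submodule F V :=
  ⨆ P ∈ S, P.submodule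

/-- `S` is a strong `k`-blocking set of an ambient projective space of projective
dimension `N`: every `(N-k)`-dimensional projective subspace `W` (i.e. linear subspace of
rank `N-k+1`) is spanned by its intersection with `S`. -/
def StrongBlock (N k : ℕ) (S : Set (Projectivization F V)) : Prop :=
  ∀ W : Submodule F V, finrank F W = N - k + 1 →
    spanPts F V (S ∩ ptsIn F V W) = W

end HP

open HP

/-!
If two lines of `L` meet in a point `p`, pick `(N - 1) / 2` further lines: together with `p`
they lie in a hyperplane `H`. Each of the at most `N - 2` remaining lines meets `H` in a point,
and these points together with `p` lie in an `(N - 2)`-space `T ≤ H`. Then `T` meets every line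
of `L`: the picked lines because they lie in `H`, where `T` is a hyperplane. A line not in `T`
lies in only one of the `q + 1` hyperplanes through `T` (the points of `ℙ(V ⧸ T)`), so as
`|L| ≤ q` some hyperplane through `T` meets every line of `L` only inside `T`; its points on
the lines of `L` span at most `T`.
-/

open Submodule

section LinearAlgebra

variable {F : Type*} [Field F] {V : Type*} [AddCommGroup V] [Module F V]

theorem finrank_map_add_finrank_inf_ker {W : Type*} [AddCommGroup W] [Module F W]
    (f : V →ₗ[F] W) (p : Submodule F V) [FiniteDimensional F p] :
    finrank F (p.map f) + finrank F ↥(p ⊓ LinearMap.ker f) = finrank F p := by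
  have h := (f.domRestrict p).finrank_range_add_finrank_ker
  rwa [LinearMap.range_domRestrict, LinearMap.ker_domRestrict,
    (equivMapOfInjective _ p.injective_subtype _).finrank_eq, map_comap_subtype] at h

variable [FiniteDimensional F V]

theorem finrank_comap_mkQ (T : Submodule F V) (S : Submodule F (V ⧸ T)) :
    finrank F (S.comap T.mkQ) = finrank F S + finrank F T := by
  have h := finrank_map_add_finrank_inf_ker T.mkQ (S.comap T.mkQ)
  rw [map_comap_eq_of_surjective T.mkQ_surjective, ker_mkQ,
    inf_eq_right.mpr (le_comap_mkQ T S)] at h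
  exact h.symm

theorem finrank_map_mkQ_lt {T ℓ : Submodule F V} (h : ℓ ⊓ T ≠ ⊥) :
    finrank F (ℓ.map T.mkQ) < finrank F ℓ := by
  have h' := finrank_map_add_finrank_inf_ker T.mkQ ℓ
  rw [ker_mkQ] at h'
  have : finrank F ↥(ℓ ⊓ T) ≠ 0 := by rwa [Ne, finrank_eq_zero]
  omega

theorem inf_ne_bot_of_finrank_lt_add {A B H : Submodule F V} (hA : A ≤ H) (hB : B ≤ H)
    (h : finrank F H < finrank F A + finrank F B) : A ⊓ B ≠ ⊥ := by
  intro hbot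
  have key := finrank_sup_add_finrank_inf_eq A B
  rw [hbot, finrank_bot] at key
  have := finrank_mono (sup_le hA hB)
  omega

theorem eq_span_singleton_of_finrank_le_one {A : Submodule F V} (hA : finrank F A ≤ 1) {x : V}
    (hx : x ∈ A) (hx0 : x ≠ 0) : A = F ∙ x :=
  (eq_of_le_of_finrank_le ((span_singleton_le_iff_mem _ _).mpr hx)
    (by rwa [finrank_span_singleton hx0])).symm

theorem exists_between_finrank_eq {S H : Submodule F V} (hSH : S ≤ H) {k : ℕ}
    (hS : finrank F S ≤ k) (hk : k ≤ finrank F H) :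
    ∃ W : Submodule F V, S ≤ W ∧ W ≤ H ∧ finrank F W = k := by
  induction k with
  | zero => exact ⟨S, le_rfl, hSH, by omega⟩
  | succ k ih =>
    rcases hS.eq_or_lt with hS | hS
    · exact ⟨S, le_rfl, hSH, hS⟩
    obtain ⟨W, hSW, hWH, hW⟩ := ih (by omega) (by omega)
    obtain ⟨u, huH, huW⟩ := SetLike.exists_of_lt
      (lt_of_le_of_ne hWH (by rintro rfl; omega))
    exact ⟨W ⊔ F ∙ u, hSW.trans le_sup_left,
      sup_le hWH ((span_singleton_le_iff_mem _ _).mpr huH),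
      by rw [finrank_sup_span_singleton huW, hW]⟩

theorem finrank_finset_sup_le {ι : Type*} (s : Finset ι) (f : ι → Submodule F V) {c : ℕ}
    (hc : ∀ i ∈ s, finrank F (f i) ≤ c) : finrank F ↥(s.sup f) ≤ s.card * c := by
  classical
  induction s using Finset.induction with
  | empty => simp
  | @insert a s ha ih =>
    rw [Finset.sup_insert, Finset.card_insert_of_notMem ha, add_mul, one_mul, add_comm _ c]
    exact (finrank_add_le_finrank_add_finrank _ _).trans (add_le_add
      (hc a (Finset.mem_insert_self a s)) (ih fun i hi => hc i (Finset.mem_insert_of_mem hi)))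

end LinearAlgebra

open scoped LinearAlgebra.Projectivization

section Projective

variable {F : Type*} [Field F] {V : Type*} [AddCommGroup V] [Module F V] [FiniteDimensional F V]

theorem exists_point_inf_comap_mkQ_le (T : Submodule F V) {L : Set (Submodule F V)}
    (hfin : L.Finite) (hL : ∀ ℓ ∈ L, finrank F (ℓ.map T.mkQ) ≤ 1)
    (hcard : L.ncard < Nat.card (ℙ F (V ⧸ T))) :
    ∃ P : ℙ F (V ⧸ T), ∀ ℓ ∈ L, ℓ ⊓ P.submodule.comap T.mkQ ≤ T := by
  by_contra! h
  have hmap : ∀ P : ℙ F (V ⧸ T), ∃ ℓ ∈ L, ℓ.map T.mkQ = P.submodule := by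
    intro P
    obtain ⟨ℓ, hℓ, hle⟩ := h P
    obtain ⟨x, ⟨hxℓ, hxP⟩, hxT⟩ := SetLike.not_le_iff_exists.mp hle
    have hx0 : T.mkQ x ≠ 0 := by simpa using hxT
    refine ⟨ℓ, hℓ, ?_⟩
    rw [eq_span_singleton_of_finrank_le_one (hL ℓ hℓ) (mem_map_of_mem hxℓ) hx0,
      eq_span_singleton_of_finrank_le_one P.finrank_submodule.le hxP hx0]
  choose ℓ hℓL hℓP using hmap
  have hinj : Function.Injective fun P => (⟨ℓ P, hℓL P⟩ : L) := fun P Q hPQ =>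
    Projectivization.submodule_injective <| by
      rw [← hℓP, ← hℓP, Subtype.mk.inj hPQ]
  have := hfin.to_subtype
  have := Nat.card_le_card_of_injective _ hinj
  rw [Nat.card_coe_set_eq] at this
  omega

theorem not_strongBlock_of_transversal [Finite F] {N : ℕ} (hV : finrank F V = N + 1)
    (T : Submodule F V) (hT : finrank F T + 1 = N) {L : Set (Submodule F V)} (hfin : L.Finite)
    (hcard : L.ncard ≤ Nat.card F) (hdim : ∀ ℓ ∈ L, finrank F ℓ = 2)
    (hmeet : ∀ ℓ ∈ L, ℓ ⊓ T ≠ ⊥) :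
    ¬ StrongBlock F V N 1 (⋃ ℓ ∈ L, ptsIn F V ℓ) := by
  intro hblock
  have hquot : finrank F (V ⧸ T) = 2 := by
    have := T.finrank_quotient_add_finrank
    omega
  obtain ⟨P, hP⟩ := exists_point_inf_comap_mkQ_le T hfin
    (fun ℓ hℓ => by have := finrank_map_mkQ_lt (hmeet ℓ hℓ); have := hdim ℓ hℓ; omega)
    (by rw [Projectivization.card_of_finrank_two F _ hquot]; omega)
  set W := P.submodule.comap T.mkQ
  have hW : finrank F W = finrank F T + 1 := by
    rw [finrank_comap_mkQ, Projectivization.finrank_submodule, add_comm]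
  have hspan : spanPts F V ((⋃ ℓ ∈ L, ptsIn F V ℓ) ∩ ptsIn F V W) ≤ T := by
    refine iSup₂_le fun Q ⟨hQL, hQW⟩ => ?_
    obtain ⟨ℓ, hℓ, hQℓ⟩ := Set.mem_iUnion₂.mp hQL
    exact (le_inf hQℓ hQW).trans (hP ℓ hℓ)
  rw [hblock W (by omega)] at hspan
  have := finrank_mono hspan
  omega

end Projective

section Transversal

variable {F : Type*} [Field F] {V : Type*} [AddCommGroup V] [Module F V] [FiniteDimensional F V]

theorem exists_le_finrank_eq_meeting (H : Submodule F V) {p : V} (hp : p ∈ H)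
    (R : Finset (Submodule F V)) (hR : ∀ ℓ ∈ R, ℓ ⊓ H ≠ ⊥) {k : ℕ} (hk : R.card + 1 ≤ k)
    (hkH : k ≤ finrank F H) :
    ∃ T ≤ H, finrank F T = k ∧ p ∈ T ∧ ∀ ℓ ∈ R, ℓ ⊓ T ≠ ⊥ := by
  classical
  choose! x hx hx0 using fun ℓ hℓ => exists_mem_ne_zero_of_ne_bot (hR ℓ hℓ)
  set S := span F (↑(insert p (R.image x)) : Set V)
  have hSH : S ≤ H := span_le.mpr <| by
    simp only [Finset.coe_insert, Finset.coe_image, Set.insert_subset_iff, Set.image_subset_iff]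
    exact ⟨hp, fun ℓ hℓ => (hx ℓ hℓ).2⟩
  have hS : finrank F S ≤ k :=
    (finrank_span_finset_le_card _).trans <|
      (Finset.card_insert_le _ _).trans (by have := R.card_image_le (f := x); omega)
  obtain ⟨T, hST, hTH, hT⟩ := exists_between_finrank_eq hSH hS hkH
  refine ⟨T, hTH, hT, hST (subset_span (by simp)), fun ℓ hℓ => ?_⟩
  exact (Submodule.ne_bot_iff _).mpr ⟨x ℓ, ⟨(hx ℓ hℓ).1, hST (subset_span (Finset.mem_insert_of_mem (Finset.mem_image_of_mem x hℓ)))⟩,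
    hx0 ℓ hℓ⟩

theorem exists_transversal_of_inf_ne_bot {N : ℕ} (hV : finrank F V = N + 1)
    {L : Finset (Submodule F V)} (hdim : ∀ ℓ ∈ L, finrank F ℓ = 2)
    (hcard : L.card ≤ N + (N - 1) / 2) {ℓ₁ ℓ₂ : Submodule F V} (h₁ : ℓ₁ ∈ L) (h₂ : ℓ₂ ∈ L)
    (hne : ℓ₁ ≠ ℓ₂) (hmeet : ℓ₁ ⊓ ℓ₂ ≠ ⊥) :
    ∃ T : Submodule F V, finrank F T + 1 = N ∧ ∀ ℓ ∈ L, ℓ ⊓ T ≠ ⊥ := by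
  classical
  obtain ⟨p, ⟨hp₁, hp₂⟩, hp0⟩ := exists_mem_ne_zero_of_ne_bot hmeet
  set L' := (L.erase ℓ₁).erase ℓ₂
  have hL' : L'.card + 2 = L.card := by
    rw [Finset.card_erase_of_mem (Finset.mem_erase.mpr ⟨hne.symm, h₂⟩),
      Finset.card_erase_of_mem h₁]
    have := Finset.one_lt_card.mpr ⟨ℓ₁, h₁, ℓ₂, h₂, hne⟩
    omega
  obtain ⟨K, hKL', hK⟩ := Finset.exists_subset_card_eq (min_le_right ((N - 1) / 2) L'.card)
  have hA : finrank F ↥((F ∙ p) ⊔ K.sup id) ≤ N := by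
    have := finrank_add_le_finrank_add_finrank (F ∙ p) (K.sup id)
    have := finrank_finset_sup_le K id (c := 2) fun ℓ hℓ =>
      (hdim ℓ (Finset.mem_of_mem_erase (Finset.mem_of_mem_erase (hKL' hℓ)))).le
    rw [finrank_span_singleton hp0] at *
    omega
  obtain ⟨H, hAH, -, hH⟩ := exists_between_finrank_eq le_top hA (by rw [finrank_top]; omega)
  have hRH : ∀ ℓ ∈ L' \ K, ℓ ⊓ H ≠ ⊥ := fun ℓ hℓ =>
    inf_ne_bot_of_finrank_lt_add le_top le_top <| by
      rw [finrank_top, hV, hH,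
        hdim ℓ (Finset.mem_of_mem_erase (Finset.mem_of_mem_erase (Finset.sdiff_subset hℓ)))]
      omega
  obtain ⟨T, hTH, hT, hpT, hRT⟩ := exists_le_finrank_eq_meeting H
    (hAH (mem_sup_left (mem_span_singleton_self p))) (L' \ K) hRH (k := N - 1)
    (by rw [Finset.card_sdiff_of_subset hKL']; omega) (by omega)
  refine ⟨T, by omega, fun ℓ hℓ => ?_⟩
  by_cases hℓ₁ : ℓ = ℓ₁
  · exact (Submodule.ne_bot_iff _).mpr ⟨p, ⟨hℓ₁ ▸ hp₁, hpT⟩, hp0⟩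
  by_cases hℓ₂ : ℓ = ℓ₂
  · exact (Submodule.ne_bot_iff _).mpr ⟨p, ⟨hℓ₂ ▸ hp₂, hpT⟩, hp0⟩
  by_cases hℓK : ℓ ∈ K
  · refine inf_ne_bot_of_finrank_lt_add ?_ hTH (by rw [hH, hT, hdim ℓ hℓ]; omega)
    exact (Finset.le_sup (f := id) hℓK).trans (le_sup_right.trans hAH)
  · exact hRT ℓ (Finset.mem_sdiff.mpr
      ⟨Finset.mem_erase.mpr ⟨hℓ₂, Finset.mem_erase.mpr ⟨hℓ₁, hℓ⟩⟩, hℓK⟩)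

end Transversal

theorem stmt_7_general (F : Type*) [Field F] [Fintype F] (N : ℕ) (hodd : Odd N)
    (L : Set (Submodule F (Fin (N + 1) → F)))
    (hdim : ∀ ℓ ∈ L, finrank F ℓ = 2)
    (hL : StrongBlock F (Fin (N + 1) → F) N 1 (⋃ ℓ ∈ L, ptsIn F (Fin (N + 1) → F) ℓ))
    (hcard : L.ncard = N + N / 2) (hq : N + N / 2 ≤ Fintype.card F) :
    ∀ ℓ₁ ∈ L, ∀ ℓ₂ ∈ L, ℓ₁ ≠ ℓ₂ → ℓ₁ ⊓ ℓ₂ = ⊥ := by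
  intro ℓ₁ h₁ ℓ₂ h₂ hne
  by_contra hmeet
  have hfin : L.Finite := Set.finite_of_ncard_pos (by rw [hcard]; obtain ⟨k, rfl⟩ := hodd; omega)
  have hV : finrank F (Fin (N + 1) → F) = N + 1 := finrank_fin_fun F
  obtain ⟨T, hT, hTL⟩ := exists_transversal_of_inf_ne_bot hV (L := hfin.toFinset)
    (by simpa using hdim)
    (by rw [← Set.ncard_eq_toFinset_card L hfin, hcard]; obtain ⟨k, rfl⟩ := hodd; omega)
    (hfin.mem_toFinset.mpr h₁) (hfin.mem_toFinset.mpr h₂) hne hmeet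
  exact not_strongBlock_of_transversal hV T hT hfin
    (by rw [Nat.card_eq_fintype_card]; omega) hdim (by simpa using hTL) hL

/-- if `L` is a higgledy-piggledy set of lines of `PG(N,q)`, `N` odd, with
`|L| = N + ⌊N/2⌋ ≤ q`, then the lines of `L` are pairwise disjoint. -/
theorem stmt_7 (F : Type*) [Field F] [Fintype F] (N : ℕ) (hN : 1 ≤ N) (hodd : Odd N)
    (L : Set (Submodule F (Fin (N + 1) → F)))
    (hdim : ∀ ℓ ∈ L, finrank F ℓ = 2)
    (hL : StrongBlock F (Fin (N + 1) → F) N 1 (⋃ ℓ ∈ L, ptsIn F (Fin (N + 1) → F) ℓ))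
    (hcard : L.ncard = N + N / 2) (hq : N + N / 2 ≤ Fintype.card F) :
    ∀ ℓ₁ ∈ L, ∀ ℓ₂ ∈ L, ℓ₁ ≠ ℓ₂ → ℓ₁ ⊓ ℓ₂ = ⊥ :=
  stmt_7_general F N hodd L hdim hL hcard hq
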